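/- arXiv:2407.16413 — 2 statements merged into one kernel-verified Lean document; each statement's English description precedes it below -/
import Mathlib

section
/- Let A ∈ ℝ^{m×n}, x̄ ∈ ℝ^n, and let R : ℝ^n → ℝ ∪ {+∞} be proper and lower semicontinuous. Assume: (i) there exists x ∈ dom(R) with |Ax| = √ȳ entrywise; (ii) R is non-negative; (iii) Ker(R_∞) ∩ Ker(A) = {0}, where R_∞ is the asymptotic function of R. Then the set of minimizers of R over {x ∈ ℝ^n : |Ax| = √ȳ entrywise} is non-empty and compact. -/
/-!
Let `x₀` be feasible with `R x₀ < ⊤`. The set `{x feasible | R x ≤ R x₀}` is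
closed, and it is bounded: otherwise it contains `x_k` with `‖x_k‖ → ∞` and
`x_k / ‖x_k‖ → z`, `‖z‖ = 1`. Then `A z = 0`, since `|A x_k|` is fixed by the constraint, and
`R_∞(z) = 0`, since `0 ≤ R(x_k) / ‖x_k‖ ≤ R(x₀) / ‖x_k‖ → 0`; this contradicts
`Ker R_∞ ∩ Ker A = {0}`. A lower semicontinuous function attains its minimum on this compact
set, and the minimizers form a closed subset of it.
-/

open MeasureTheory ProbabilityTheory Filter
open scoped NNReal ENNReal BigOperators

noncomputable section

/-- The Euclidean (`ℓ²`) norm on `Fin n → ℝ`. -/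
def enorm2 {n : ℕ} (x : Fin n → ℝ) : ℝ := Real.sqrt (∑ i, x i ^ 2)

/-- Matrix-vector multiplication for `A ∈ ℝ^{m×n}`. -/
def mulVec' {m n : ℕ} (A : Fin m → Fin n → ℝ) (x : Fin n → ℝ) : Fin m → ℝ :=
  fun i => ∑ j, A i j * x j

/-- The asymptotic (recession) function `R_∞(z) = liminf_{z'→z, t→∞} R(t z')/t`. -/
def asympFun {n : ℕ} (R : (Fin n → ℝ) → EReal) (z : Fin n → ℝ) : EReal :=
  Filter.liminf (fun p : (Fin n → ℝ) × ℝ => R (p.2 • p.1) * ((p.2⁻¹ : ℝ) : EReal))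
    ((nhds z) ×ˢ Filter.atTop)

/-- The noiseless feasible set `{x : |Ax| = √ȳ entrywise}`. -/
def feasSet {m n : ℕ} (A : Fin m → Fin n → ℝ) (ybar : Fin m → ℝ) : Set (Fin n → ℝ) :=
  {x | ∀ r, |mulVec' A x r| = Real.sqrt (ybar r)}

/-- Set of minimizers of `R` over `S`. -/
def argminOn {α β : Type*} [Preorder β] (R : α → β) (S : Set α) : Set α :=
  {x ∈ S | ∀ z ∈ S, R x ≤ R z}

/-- Convexity for `EReal`-valued functions. -/
def ERealConvex {n : ℕ} (R : (Fin n → ℝ) → EReal) : Prop :=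
  ∀ x y : Fin n → ℝ, ∀ a b : ℝ, 0 ≤ a → 0 ≤ b → a + b = 1 →
    R (a • x + b • y) ≤ (a : EReal) * R x + (b : EReal) * R y

/-- Descent cone of `R` at `x̄`. -/
def descentCone {n : ℕ} {β : Type*} [Preorder β] (R : (Fin n → ℝ) → β)
    (xbar : Fin n → ℝ) : Set (Fin n → ℝ) :=
  {z | ∃ t : ℝ, 0 < t ∧ R (xbar + t • z) ≤ R xbar}

/-- Euclidean unit sphere of `ℝⁿ`. -/
def unitSphere (n : ℕ) : Set (Fin n → ℝ) := {x | enorm2 x = 1}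

/-- The constant ν = (1/18)√(π/2). -/
def nu : ℝ := (1 / 18) * Real.sqrt (Real.pi / 2)

/-- Law of a random `m × n` matrix with i.i.d. `N(0, 1/m)` entries. -/
def gaussMatrix (m n : ℕ) : Measure (Fin m → Fin n → ℝ) :=
  Measure.pi fun _ => Measure.pi fun _ => gaussianReal 0 (m : ℝ≥0)⁻¹

/-- Standard Gaussian vector `N(0, Id_n)`. -/
def gaussVec (n : ℕ) : Measure (Fin n → ℝ) := Measure.pi fun _ => gaussianReal 0 1

/-- Dot product. -/
def dot {n : ℕ} (x y : Fin n → ℝ) : ℝ := ∑ i, x i * y i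

/-- Gaussian width of S. -/
def gaussianWidth {n : ℕ} (S : Set (Fin n → ℝ)) : ℝ :=
  ∫ z, sSup ((fun x => dot z x) '' S) ∂(gaussVec n)

/-- `‖A^I x‖₂` : ℓ² norm of the rows of `Ax` indexed by `I`. -/
def rowNorm {m n : ℕ} (A : Fin m → Fin n → ℝ) (I : Finset (Fin m)) (x : Fin n → ℝ) : ℝ :=
  Real.sqrt (∑ i ∈ I, (mulVec' A x i) ^ 2)

/-- Covering number `N(S, δ)` by Euclidean balls of radius `δ` centered in `S`. -/
def coveringNumber {n : ℕ} (S : Set (Fin n → ℝ)) (δ : ℝ) : ℕ :=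
  sInf {k : ℕ | ∃ T : Finset (Fin n → ℝ), T.card = k ∧ ↑T ⊆ S ∧
    S ⊆ ⋃ c ∈ T, {x | enorm2 (x - c) ≤ δ}}

/-- Constrained (Mozorov) feasible set `{x : ‖y − |Ax|²‖₂ ≤ ρ}`. -/
def feasConst {m n : ℕ} (A : Fin m → Fin n → ℝ) (y : Fin m → ℝ) (ρ : ℝ) :
    Set (Fin n → ℝ) :=
  {x | enorm2 (fun i => y i - (mulVec' A x i) ^ 2) ≤ ρ}

/-- Penalized (Tikhonov) objective `F_{y,λ}(x) = ‖y − |Ax|²‖₂² + λ R(x)`. -/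
def Fpen {m n : ℕ} (A : Fin m → Fin n → ℝ) (y : Fin m → ℝ) (lam : ℝ)
    (R : (Fin n → ℝ) → EReal) (x : Fin n → ℝ) : EReal :=
  ((enorm2 (fun i => y i - (mulVec' A x i) ^ 2) ^ 2 : ℝ) : EReal) + (lam : EReal) * R x

section Semicontinuity

variable {α β : Type*} [TopologicalSpace α] [LinearOrder β]

theorem argminOn_nonempty_and_isCompact {f : α → β} (hf : LowerSemicontinuous f) {S : Set α}
    (hS : IsClosed S) {x₀ : α} (hx₀ : x₀ ∈ S) (hK : IsCompact (S ∩ {x | f x ≤ f x₀})) :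
    (argminOn f S).Nonempty ∧ IsCompact (argminOn f S) := by
  have hne : (S ∩ {x | f x ≤ f x₀}).Nonempty := ⟨x₀, hx₀, le_rfl⟩
  obtain ⟨a, ⟨haS, hax₀⟩, hmin⟩ := (hf.lowerSemicontinuousOn _).exists_isMinOn hne hK
  have ha : ∀ y ∈ S, f a ≤ f y := fun y hy =>
    (le_total (f y) (f x₀)).elim (fun h => hmin ⟨hy, h⟩) (hax₀.trans ·)
  have hargmin : argminOn f S = S ∩ {x | f x ≤ f a} := by
    ext x
    exact ⟨fun ⟨hxS, hx⟩ => ⟨hxS, hx a haS⟩,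
      fun ⟨hxS, hx⟩ => ⟨hxS, fun y hy => hx.trans (ha y hy)⟩⟩
  refine ⟨⟨a, haS, ha⟩, ?_⟩
  rw [hargmin]
  exact hK.of_isClosed_subset (hS.inter (hf.isClosed_preimage _))
    fun x ⟨hxS, hx⟩ => ⟨hxS, hx.trans hax₀⟩

end Semicontinuity

section Asymptotic

variable {E F : Type*} [NormedAddCommGroup E] [NormedSpace ℝ E]
  [NormedAddCommGroup F] [NormedSpace ℝ F]

theorem exists_tendsto_inv_norm_smul_of_not_isBounded [ProperSpace E] {K : Set E}
    (hK : ¬ Bornology.IsBounded K) :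
    ∃ (x : ℕ → E) (z : E), (∀ k, x k ∈ K) ∧ Tendsto (fun k => ‖x k‖) atTop atTop ∧
      Tendsto (fun k => ‖x k‖⁻¹ • x k) atTop (nhds z) ∧ ‖z‖ = 1 := by
  simp only [isBounded_iff_forall_norm_le, not_exists, not_forall, not_le] at hK
  choose x hxK hx using fun k : ℕ => hK k
  have hnorm : Tendsto (fun k => ‖x k‖) atTop atTop :=
    tendsto_atTop_mono (fun k => (hx k).le) tendsto_natCast_atTop_atTop
  have hsphere : ∀ k, ‖x k‖⁻¹ • x k ∈ Metric.sphere (0 : E) 1 := fun k => by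
    have : x k ≠ 0 := norm_pos_iff.1 ((Nat.cast_nonneg k).trans_lt (hx k))
    simpa [norm_smul] using inv_mul_cancel₀ (norm_ne_zero_iff.2 this)
  obtain ⟨z, hz, φ, hφ, hφz⟩ := (isCompact_sphere (0 : E) 1).tendsto_subseq hsphere
  exact ⟨x ∘ φ, z, fun k => hxK _, hnorm.comp hφ.tendsto_atTop, hφz,
    mem_sphere_zero_iff_norm.1 hz⟩

theorem ContinuousLinearMap.apply_eq_zero_of_tendsto_inv_smul (L : E →L[ℝ] F) {x : ℕ → E}
    {t : ℕ → ℝ} {z : E} {C : ℝ} (hLx : ∀ k, ‖L (x k)‖ ≤ C) (ht : Tendsto t atTop atTop)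
    (hz : Tendsto (fun k => (t k)⁻¹ • x k) atTop (nhds z)) : L z = 0 := by
  have hzero : Tendsto (fun k => L ((t k)⁻¹ • x k)) atTop (nhds 0) := by
    refine squeeze_zero_norm (a := fun k => |(t k)⁻¹| * C) (fun k => ?_) ?_
    · rw [L.map_smul, norm_smul, Real.norm_eq_abs]
      exact mul_le_mul_of_nonneg_left (hLx k) (abs_nonneg _)
    · simpa using (tendsto_inv_atTop_zero.comp ht).abs.mul_const C
  exact tendsto_nhds_unique ((L.continuous.tendsto z).comp hz) hzero

theorem asympFun_nonneg {n : ℕ} {R : (Fin n → ℝ) → EReal} (hR : ∀ x, 0 ≤ R x)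
    (z : Fin n → ℝ) : 0 ≤ asympFun R z := by
  refine le_liminf_of_le (by isBoundedDefault) ?_
  filter_upwards [(eventually_ge_atTop (0 : ℝ)).prod_inr (nhds z)] with p hp
  exact mul_nonneg (hR _) (EReal.coe_nonneg.2 (inv_nonneg.2 hp))

theorem asympFun_nonpos_of_tendsto {n : ℕ} {R : (Fin n → ℝ) → EReal} {x : ℕ → Fin n → ℝ}
    {t : ℕ → ℝ} {z : Fin n → ℝ} {c : ℝ} (hRx : ∀ k, R (x k) ≤ c) (ht : Tendsto t atTop atTop)
    (hz : Tendsto (fun k => (t k)⁻¹ • x k) atTop (nhds z)) : asympFun R z ≤ 0 := by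
  have hlim : Tendsto (fun k => ((c * (t k)⁻¹ : ℝ) : EReal)) atTop (nhds 0) := by
    simpa using EReal.tendsto_coe.2 ((tendsto_inv_atTop_zero.comp ht).const_mul c)
  calc asympFun R z
      ≤ liminf (fun k => R (t k • (t k)⁻¹ • x k) * (((t k)⁻¹ : ℝ) : EReal)) atTop := by
        refine (liminf_le_liminf_of_le (hz.prodMk ht)).trans ?_
        rw [← liminf_comp]
        rfl
    _ ≤ liminf (fun k => ((c * (t k)⁻¹ : ℝ) : EReal)) atTop := by
        refine liminf_le_liminf ?_
        filter_upwards [ht.eventually_gt_atTop 0] with k hk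
        rw [smul_inv_smul₀ hk.ne', EReal.coe_mul]
        exact mul_le_mul_of_nonneg_right (hRx k) (EReal.coe_nonneg.2 (inv_nonneg.2 hk.le))
    _ = 0 := hlim.liminf_eq

theorem isBounded_of_asympFun_ker {n : ℕ} {R : (Fin n → ℝ) → EReal} (hR : ∀ x, 0 ≤ R x)
    (L : (Fin n → ℝ) →L[ℝ] F) (hker : ∀ z, asympFun R z = 0 → L z = 0 → z = 0)
    {K : Set (Fin n → ℝ)} {C c : ℝ} (hLK : ∀ x ∈ K, ‖L x‖ ≤ C) (hRK : ∀ x ∈ K, R x ≤ c) :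
    Bornology.IsBounded K := by
  by_contra hK
  obtain ⟨x, z, hxK, hnorm, hz, hz1⟩ := exists_tendsto_inv_norm_smul_of_not_isBounded hK
  have hRz : asympFun R z = 0 := le_antisymm
    (asympFun_nonpos_of_tendsto (fun k => hRK _ (hxK k)) hnorm hz) (asympFun_nonneg hR z)
  have hLz : L z = 0 := L.apply_eq_zero_of_tendsto_inv_smul (fun k => hLK _ (hxK k)) hnorm hz
  simp [hker z hRz hLz] at hz1

end Asymptotic

section FeasibleSet

variable {m n : ℕ} (A : Fin m → Fin n → ℝ) (y : Fin m → ℝ)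

theorem continuous_mulVec' : Continuous (mulVec' A) := by
  unfold mulVec'
  fun_prop

theorem isClosed_feasSet : IsClosed (feasSet A y) := by
  simp only [feasSet, Set.ofPred_forall]
  exact isClosed_iInter fun r =>
    isClosed_eq ((continuous_apply r).comp (continuous_mulVec' A)).abs continuous_const

theorem norm_mulVec'_le_of_mem_feasSet {x : Fin n → ℝ} (hx : x ∈ feasSet A y) :
    ‖mulVec' A x‖ ≤ ‖fun r => Real.sqrt (y r)‖ := by
  refine (pi_norm_le_iff_of_nonneg (norm_nonneg _)).2 fun r => ?_
  rw [Real.norm_eq_abs, hx r]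
  exact (Real.le_norm_self _).trans (norm_le_pi_norm (fun r => Real.sqrt (y r)) r)

end FeasibleSet

theorem statement0_general {m n : ℕ} (A : Fin m → Fin n → ℝ) (xbar : Fin n → ℝ)
    (R : (Fin n → ℝ) → EReal)
    (hRlsc : LowerSemicontinuous R)
    (hfeas : ∃ x, R x ≠ ⊤ ∧ x ∈ feasSet A (fun r => (mulVec' A xbar r) ^ 2))
    (hRnonneg : ∀ x, 0 ≤ R x)
    (hker : {z : Fin n → ℝ | asympFun R z = 0} ∩ {z | mulVec' A z = 0} = {0}) :
    (argminOn R (feasSet A (fun r => (mulVec' A xbar r) ^ 2))).Nonempty ∧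
      IsCompact (argminOn R (feasSet A (fun r => (mulVec' A xbar r) ^ 2))) := by
  obtain ⟨x₀, hx₀top, hx₀S⟩ := hfeas
  set S := feasSet A (fun r => (mulVec' A xbar r) ^ 2)
  have hx₀real : ((R x₀).toReal : EReal) = R x₀ :=
    EReal.coe_toReal hx₀top (ne_bot_of_le_ne_bot EReal.zero_ne_bot (hRnonneg x₀))
  have hbdd : Bornology.IsBounded (S ∩ {x | R x ≤ R x₀}) :=
    isBounded_of_asympFun_ker hRnonneg (Matrix.of A).mulVecLin.toContinuousLinearMap
      (fun z hRz hAz => hker.subset ⟨hRz, hAz⟩)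
      (fun x hx => norm_mulVec'_le_of_mem_feasSet A _ hx.1) (fun x hx => hx₀real ▸ hx.2)
  exact argminOn_nonempty_and_isCompact hRlsc (isClosed_feasSet A _) hx₀S
    (Metric.isCompact_of_isClosed_isBounded
      ((isClosed_feasSet A _).inter (hRlsc.isClosed_preimage _)) hbdd)

/-- existence and compactness of the set of minimizers of the noiseless
regularized phase retrieval problem. -/
theorem statement0 {m n : ℕ} (A : Fin m → Fin n → ℝ) (xbar : Fin n → ℝ)
    (R : (Fin n → ℝ) → EReal)
    (hRbot : ∀ x, R x ≠ ⊥)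
    (hRproper : ∃ x, R x ≠ ⊤)
    (hRlsc : LowerSemicontinuous R)
    (hfeas : ∃ x, R x ≠ ⊤ ∧ x ∈ feasSet A (fun r => (mulVec' A xbar r) ^ 2))
    (hRnonneg : ∀ x, 0 ≤ R x)
    (hker : {z : Fin n → ℝ | asympFun R z = 0} ∩ {z | mulVec' A z = 0} = {0}) :
    (argminOn R (feasSet A (fun r => (mulVec' A xbar r) ^ 2))).Nonempty ∧
      IsCompact (argminOn R (feasSet A (fun r => (mulVec' A xbar r) ^ 2))) :=
  statement0_general A xbar R hRlsc hfeas hRnonneg hker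
end
end

section
/- Let A ∈ ℝ^{m×n}, x̄ ∈ ℝ^n, and suppose the set of minimizers of R over {x : |Ax| = √ȳ entrywise} is non-empty. Assume: (H.1) R is proper, lower semicontinuous, convex, and even symmetric (R(−x) = R(x) for all x); (H.2) for every subset I ⊆ {1,…,m} with |I| ≥ m/2, Ker(A^I) ∩ D_R(x̄) = {0}. Then the set of minimizers of R over {x : |Ax| = √ȳ entrywise} equals {x̄, −x̄}. -/
open MeasureTheory ProbabilityTheory Filter
open scoped NNReal ENNReal BigOperators

noncomputable section

/-!
A feasible `x` satisfies `|Ax| = |Ax̄|` entrywise, so on a set `I` of at least half of the rows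
either `Ax = Ax̄` or `Ax = -Ax̄`. In the first case `x - x̄` lies in `Ker A^I`, and if moreover
`R x ≤ R x̄` it lies in the descent cone `D_R(x̄)` (take `t = 1`), so (H.2) forces `x = x̄`. In the
second case the same argument applies to `-x`, because `R` is even. Hence every feasible point
with value at most `R x̄` is `±x̄`, and a minimizer exists, so the minimal value is `R x̄ = R (-x̄)`.
-/

section

variable {m n : ℕ} (A : Fin m → Fin n → ℝ)

lemma mulVec'_sub (x y : Fin n → ℝ) (i : Fin m) :
    mulVec' A (x - y) i = mulVec' A x i - mulVec' A y i := by
  simp [mulVec', mul_sub, Finset.sum_sub_distrib]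

lemma mulVec'_neg (x : Fin n → ℝ) (i : Fin m) : mulVec' A (-x) i = -mulVec' A x i := by
  simp [mulVec']

lemma mem_feasSet_sq_iff {x xbar : Fin n → ℝ} :
    x ∈ feasSet A (fun r => mulVec' A xbar r ^ 2) ↔ ∀ r, |mulVec' A x r| = |mulVec' A xbar r| := by
  simp [feasSet, Real.sqrt_sq_eq_abs]

lemma half_le_card_filter_eq_or_eq_neg (u v : Fin m → ℝ) (h : ∀ r, |u r| = |v r|) :
    (m : ℝ) / 2 ≤ (Finset.univ.filter fun r => u r = v r).card ∨
      (m : ℝ) / 2 ≤ (Finset.univ.filter fun r => u r = -v r).card := by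
  set p := Finset.univ.filter fun r => u r = v r
  set q := Finset.univ.filter fun r => u r = -v r
  have hcover : p ∪ q = Finset.univ := by
    rw [← Finset.filter_or]
    exact Finset.filter_true_of_mem fun r _ => abs_eq_abs.mp (h r)
  have hcard : (m : ℝ) ≤ p.card + q.card := by
    have := Finset.card_union_le p q
    rw [hcover, Finset.card_univ, Fintype.card_fin] at this
    exact_mod_cast this
  by_contra! hsmall
  linarith [hsmall.1, hsmall.2]

variable {β : Type*} [Preorder β] {R : (Fin n → ℝ) → β} {x xbar : Fin n → ℝ}

lemma eq_of_mulVec'_eq_on_of_le {I : Finset (Fin m)}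
    (hI : {z : Fin n → ℝ | ∀ i ∈ I, mulVec' A z i = 0} ∩ descentCone R xbar = {0})
    (hAx : ∀ i ∈ I, mulVec' A x i = mulVec' A xbar i) (hRx : R x ≤ R xbar) : x = xbar := by
  have hmem : x - xbar ∈ {z : Fin n → ℝ | ∀ i ∈ I, mulVec' A z i = 0} ∩ descentCone R xbar :=
    ⟨fun i hi => by rw [mulVec'_sub, hAx i hi, sub_self],
      ⟨1, one_pos, by rwa [one_smul, add_sub_cancel]⟩⟩
  rw [hI] at hmem
  exact sub_eq_zero.mp hmem

lemma eq_or_eq_neg_of_mem_feasSet_of_le (hReven : ∀ x, R (-x) = R x)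
    (hH2 : ∀ I : Finset (Fin m), (m : ℝ) / 2 ≤ I.card →
      {z : Fin n → ℝ | ∀ i ∈ I, mulVec' A z i = 0} ∩ descentCone R xbar = {0})
    (hx : x ∈ feasSet A (fun r => mulVec' A xbar r ^ 2)) (hRx : R x ≤ R xbar) :
    x = xbar ∨ x = -xbar := by
  rcases half_le_card_filter_eq_or_eq_neg _ _ ((mem_feasSet_sq_iff A).mp hx) with hI | hI
  · exact .inl <| eq_of_mulVec'_eq_on_of_le A (hH2 _ hI)
      (fun i hi => (Finset.mem_filter.mp hi).2) hRx
  · refine .inr <| neg_eq_iff_eq_neg.mp <| eq_of_mulVec'_eq_on_of_le A (hH2 _ hI)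
      (fun i hi => ?_) (by rwa [hReven])
    rw [mulVec'_neg, (Finset.mem_filter.mp hi).2, neg_neg]

end

theorem statement1_general {m n : ℕ} (A : Fin m → Fin n → ℝ) (xbar : Fin n → ℝ)
    (R : (Fin n → ℝ) → EReal)
    (hnonempty : (argminOn R (feasSet A (fun r => (mulVec' A xbar r) ^ 2))).Nonempty)
    (hReven : ∀ x, R (-x) = R x)
    (hH2 : ∀ I : Finset (Fin m), (m : ℝ) / 2 ≤ I.card →
      {z : Fin n → ℝ | ∀ i ∈ I, mulVec' A z i = 0} ∩ descentCone R xbar = {0}) :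
    argminOn R (feasSet A (fun r => (mulVec' A xbar r) ^ 2)) = {xbar, -xbar} := by
  set S := feasSet A (fun r => (mulVec' A xbar r) ^ 2)
  have hxbar : xbar ∈ S := (mem_feasSet_sq_iff A).mpr fun _ => rfl
  have hnegxbar : -xbar ∈ S := (mem_feasSet_sq_iff A).mpr fun r => by rw [mulVec'_neg, abs_neg]
  have hrecover : ∀ x ∈ argminOn R S, x = xbar ∨ x = -xbar := fun x hx =>
    eq_or_eq_neg_of_mem_feasSet_of_le A hReven hH2 hx.1 (hx.2 xbar hxbar)
  have hmin : ∀ z ∈ S, R xbar ≤ R z := by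
    obtain ⟨x₀, hx₀⟩ := hnonempty
    have hval : R x₀ = R xbar := by
      rcases hrecover x₀ hx₀ with rfl | rfl
      · rfl
      · exact hReven xbar
    exact fun z hz => hval ▸ hx₀.2 z hz
  ext x
  refine ⟨hrecover x, ?_⟩
  rintro (rfl | rfl)
  · exact ⟨hxbar, hmin⟩
  · exact ⟨hnegxbar, fun z hz => (hReven _).symm ▸ hmin z hz⟩

/-- exact recovery up to global sign under (H.1) and (H.2). -/
theorem statement1 {m n : ℕ} (A : Fin m → Fin n → ℝ) (xbar : Fin n → ℝ)
    (R : (Fin n → ℝ) → EReal)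
    (hnonempty : (argminOn R (feasSet A (fun r => (mulVec' A xbar r) ^ 2))).Nonempty)
    (hRbot : ∀ x, R x ≠ ⊥)
    (hRproper : ∃ x, R x ≠ ⊤)
    (hRlsc : LowerSemicontinuous R)
    (hRconv : ERealConvex R)
    (hReven : ∀ x, R (-x) = R x)
    (hH2 : ∀ I : Finset (Fin m), (m : ℝ) / 2 ≤ I.card →
      {z : Fin n → ℝ | ∀ i ∈ I, mulVec' A z i = 0} ∩ descentCone R xbar = {0}) :
    argminOn R (feasSet A (fun r => (mulVec' A xbar r) ^ 2)) = {xbar, -xbar} :=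
  statement1_general A xbar R hnonempty hReven hH2

end
end
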